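/- The second regularized Bingham stress σ₂ᵇ is monotone nondecreasing in ε on ℝ when σ₀ > 1/(2β) and γ, β > 0. -/

import Mathlib

/-!
σ₂ᵇ is odd, so it suffices to show monotonicity on `[0, ∞)`, where it is `g (γ ε)` for the
profile `g = sigma2bProfile σ₀ β`: the line `2u` up to `u = σ₀ - 1/(2β)`, then a concave parabola
rising to its vertex at `u = σ₀ + 1/(2β)`, then the constant `2σ₀`. The parabola
`2σ₀ - β (σ₀ + 1/(2β) - u)²` meets the line tangentially at `u = σ₀ - 1/(2β)`, so the pieces join
into a monotone function; the assumption `σ₀ > 1/(2β)` puts the origin on the linear piece, so that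
`g 0 = 0 = σ₂ᵇ 0`.
-/

noncomputable def sigma2b (σ₀ γ β : ℝ) (ε : ℝ) : ℝ :=
  if γ * |ε| ≥ σ₀ + 1 / (2 * β) then 2 * σ₀ * Real.sign ε
  else if σ₀ - 1 / (2 * β) ≤ γ * |ε| then
    Real.sign ε * (2 * σ₀ - β * (σ₀ - γ * |ε| + 1 / (2 * β)) ^ 2)
  else 2 * γ * ε

open Set

noncomputable def sigma2bProfile (σ₀ β u : ℝ) : ℝ :=
  if u ≥ σ₀ + 1 / (2 * β) then 2 * σ₀
  else if σ₀ - 1 / (2 * β) ≤ u then 2 * σ₀ - β * (σ₀ - u + 1 / (2 * β)) ^ 2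
  else 2 * u

section

variable {σ₀ β : ℝ}

theorem sigma2bProfile_monotone (hβ : 0 < β) : Monotone (sigma2bProfile σ₀ β) := by
  intro u v huv
  have hc : 0 < 1 / (2 * β) := by positivity
  unfold sigma2bProfile
  split_ifs with hu hv hv' hu' hv hv' hv hv'
  · exact le_rfl
  · linarith
  · linarith
  · exact sub_le_self _ (by positivity)
  · have hsq : (σ₀ - v + 1 / (2 * β)) ^ 2 ≤ (σ₀ - u + 1 / (2 * β)) ^ 2 :=
      pow_le_pow_left₀ (by linarith) (by linarith) 2
    exact sub_le_sub_left (mul_le_mul_of_nonneg_left hsq hβ.le) _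
  · linarith
  · linarith
  · -- `q v - 2 (σ₀ - 1/(2β)) = β (v - σ₀ + 1/(2β)) (σ₀ - v + 1/(2β) + 1/β)` for the parabola `q`
    have hβc : β * (1 / (2 * β)) = 1 / 2 := by field_simp
    nlinarith [mul_nonneg (sub_nonneg.2 hv')
      (show 0 ≤ σ₀ - v + 1 / (2 * β) + 1 / β by linarith [one_div_pos.2 hβ])]
  · linarith

theorem sigma2bProfile_zero (hβ : 0 < β) (hσ : 1 / (2 * β) < σ₀) : sigma2bProfile σ₀ β 0 = 0 := by
  have : 0 < 1 / (2 * β) := by positivity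
  rw [sigma2bProfile, if_neg (by linarith), if_neg (by linarith), mul_zero]

end

section

variable (σ₀ γ β : ℝ)

theorem sigma2b_neg (ε : ℝ) : sigma2b σ₀ γ β (-ε) = -sigma2b σ₀ γ β ε := by
  unfold sigma2b
  rw [abs_neg, Real.sign_neg]
  split_ifs <;> ring

theorem sigma2b_zero : sigma2b σ₀ γ β 0 = 0 := by
  simp [sigma2b]

theorem sigma2b_eq_sigma2bProfile_of_pos {ε : ℝ} (hε : 0 < ε) :
    sigma2b σ₀ γ β ε = sigma2bProfile σ₀ β (γ * ε) := by
  unfold sigma2b sigma2bProfile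
  rw [abs_of_pos hε, Real.sign_of_pos hε]
  split_ifs <;> ring

variable {σ₀ β}

theorem sigma2b_eqOn_sigma2bProfile (hβ : 0 < β) (hσ : 1 / (2 * β) < σ₀) :
    EqOn (sigma2b σ₀ γ β) (fun ε ↦ sigma2bProfile σ₀ β (γ * ε)) (Ici 0) := by
  intro ε hε
  rcases (mem_Ici.mp hε).eq_or_lt with rfl | hε
  · simp only [sigma2b_zero, mul_zero, sigma2bProfile_zero hβ hσ]
  · exact sigma2b_eq_sigma2bProfile_of_pos σ₀ γ β hε

end

theorem sigma2b_monotone (σ₀ γ β : ℝ) (hγ : 0 < γ) (hβ : 0 < β)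
    (hσ : 1 / (2 * β) < σ₀) : Monotone (sigma2b σ₀ γ β) := by
  refine monotone_of_odd_of_monotoneOn_nonneg (sigma2b_neg σ₀ γ β) ?_
  have hprofile : Monotone fun ε ↦ sigma2bProfile σ₀ β (γ * ε) :=
    (sigma2bProfile_monotone hβ).comp (monotone_mul_left_of_nonneg hγ.le)
  exact (hprofile.monotoneOn _).congr (sigma2b_eqOn_sigma2bProfile γ hβ hσ).symm
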